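/- Let $e_0 \leq -2$ be an integer and $r_1, \dots, r_n \in (0,1) \cap \mathbb{Q}$ with $e_0 + r_1 + \cdots + r_n < 0$. Then there is no integer $q > 1$ together with positive integers $p_1, \dots, p_n$ satisfying both $p_1 + \cdots + p_n = -e_0 q + n - 2$ and $\frac{p_i - 1}{q - 1} \leq r_i < \frac{p_i}{q}$ for all $i$. -/
import Mathlib


/-- Statement 2: for `e₀ ≤ -2` and Seifert coefficients with
`e₀ + ∑ rᵢ < 0`, no twisting parameter `q > 1` is admissible. -/
theorem stmt_2 (e0 : ℤ) (he0 : e0 ≤ -2) (n : ℕ) (r : Fin n → ℚ)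
    (hr : ∀ i, 0 < r i ∧ r i < 1)
    (hneg : (e0 : ℚ) + ∑ i, r i < 0) :
    ¬ ∃ (q : ℤ) (p : Fin n → ℤ), 1 < q ∧ (∀ i, 0 < p i) ∧
      (∑ i, p i = -e0 * q + n - 2) ∧
      ∀ i, ((p i - 1 : ℤ) : ℚ) / ((q - 1 : ℤ) : ℚ) ≤ r i ∧
        r i < (p i : ℚ) / (q : ℚ) := by
  rintro ⟨q, p, hq, hp, hsum, hb⟩
  have hq1 : (0:ℚ) < ((q - 1 : ℤ) : ℚ) := by
    have : (0:ℤ) < q - 1 := by omega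
    exact_mod_cast this
  have key : ∀ i, ((p i - 1 : ℤ) : ℚ) ≤ r i * ((q - 1 : ℤ) : ℚ) :=
    fun i => (div_le_iff₀ hq1).mp (hb i).1
  have hsum' : (∑ i, ((p i - 1 : ℤ) : ℚ)) ≤ (∑ i, r i) * ((q - 1 : ℤ) : ℚ) := by
    rw [Finset.sum_mul]
    exact Finset.sum_le_sum (fun i _ => key i)
  have hlhs : (∑ i, ((p i - 1 : ℤ) : ℚ)) = ((-e0 * q - 2 : ℤ) : ℚ) := by
    push_cast
    rw [Finset.sum_sub_distrib]
    have : (∑ i, (p i : ℚ)) = ((∑ i, p i : ℤ) : ℚ) := by push_cast; ring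
    rw [this, hsum]
    push_cast
    simp
    ring
  rw [hlhs] at hsum'
  have hS : (∑ i, r i) < -(e0 : ℚ) := by linarith
  have := mul_lt_mul_of_pos_right hS hq1
  have he0' : (e0 : ℚ) ≤ -2 := by exact_mod_cast he0
  push_cast at hsum' this
  nlinarith
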